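/- Fix b > 0, β > 0, q ∈ ℝ, c > 0, and a smooth function ρ : [−1,1] → ℝ. Set θ(m) = tanh(β·(q + b·m)) and u(m) = c·(1 − m·θ(m)). For N ≥ 2 and 1 ≤ i ≤ N+1 write m_i = −1 + 2(i−1)/N, and set Π₋(m) = c·(1+m)·(1 − θ(m − 2/N)) and Π₊(m) = c·(1−m)·(1 + θ(m + 2/N)). Let K_N be the tridiagonal symmetric bistochastic matrix with off-diagonal entries k_{i,i+1} = k_{i+1,i} = u(m_{i+1}), and let P_N = (κ_{ij}) be the tridiagonal left-stochastic matrix with κ_{i,i−1} = Π₊(m_{i−1}), κ_{i,i+1} = Π₋(m_{i+1}), κ_{ii} = 1 − Π₋(m_i) − Π₊(m_i); set W_N = P_N − K_N and let ρ_N ∈ ℝ^{N+1} be the vector with entries ρ(m_i). Then for every compact interval Kc ⊂ (−1,1) there is C > 0 such that for all N and all i with 2 ≤ i ≤ N and m_i ∈ Kc, | N·(W_N ρ_N)_i − 4c·( (m − θ(m))·ρ(m) )'|_{m = m_i} | ≤ C/N. (Thus the Glauber drift converges to 4c·((m − θ(m))·ρ(m))' at rate O(1/N).) -/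

import Mathlib

open Finset

/-- The logarithmic mean: `ℓ(x,y) = (x−y)/(log x − log y)` for `x ≠ y`,
and `ℓ(x,x) = x`. -/
noncomputable def logMean (x y : ℝ) : ℝ :=
  if x = y then x else (x - y) / (Real.log x - Real.log y)

/-- The grid point `m_i = −1 + 2(i−1)/N` (1-based index `i`). -/
noncomputable def mpt (N i : ℕ) : ℝ := -1 + 2 * ((i : ℝ) - 1) / N

/-- The tridiagonal symmetric matrix `K_N` with off-diagonal entries
`k_{i,i+1} = k_{i+1,i} = u(m_{i+1})` (0-based indexing: entry `(a,b)` is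
`k_{a+1,b+1}`). -/
noncomputable def Kmat (u : ℝ → ℝ) (N : ℕ) : Matrix (Fin (N + 1)) (Fin (N + 1)) ℝ :=
  fun a b =>
    if (b : ℕ) = (a : ℕ) + 1 then u (mpt N ((a : ℕ) + 2))
    else if (a : ℕ) = (b : ℕ) + 1 then u (mpt N ((b : ℕ) + 2))
    else if a = b then
      (if (a : ℕ) = 0 then 1 - u (mpt N 2)
       else if (a : ℕ) = N then 1 - u (mpt N (N + 1))
       else 1 - u (mpt N ((a : ℕ) + 1)) - u (mpt N ((a : ℕ) + 2)))
    else 0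

/-- The tridiagonal left-stochastic Glauber transition matrix `P_N` with
`κ_{i,i−1} = Π₊(m_{i−1})`, `κ_{i,i+1} = Π₋(m_{i+1})`,
`κ_{ii} = 1 − Π₋(m_i) − Π₊(m_i)` (0-based indexing: entry `(a,b)` is
`κ_{a+1,b+1}`). -/
noncomputable def Pmat (Pim Pip : ℝ → ℝ) (N : ℕ) :
    Matrix (Fin (N + 1)) (Fin (N + 1)) ℝ :=
  fun a b =>
    if (a : ℕ) = (b : ℕ) + 1 then Pip (mpt N ((b : ℕ) + 1))
    else if (b : ℕ) = (a : ℕ) + 1 then Pim (mpt N ((b : ℕ) + 1))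
    else if a = b then 1 - Pim (mpt N ((a : ℕ) + 1)) - Pip (mpt N ((a : ℕ) + 1))
    else 0

private lemma abs_mul_bound' {x y X Y : ℝ} (hx : |x| ≤ X) (hy : |y| ≤ Y) :
    |x * y| ≤ X * Y := by
  rw [abs_mul]
  exact mul_le_mul hx hy (abs_nonneg _) (le_trans (abs_nonneg _) hx)

private lemma abs_add_bound' {x y X Y : ℝ} (hx : |x| ≤ X) (hy : |y| ≤ Y) :
    |x + y| ≤ X + Y := le_trans (abs_add_le _ _) (add_le_add hx hy)

private lemma abs_sub_bound' {x y X Y : ℝ} (hx : |x| ≤ X) (hy : |y| ≤ Y) :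
    |x - y| ≤ X + Y := by
  rw [sub_eq_add_neg]
  exact le_trans (abs_add_le _ _) (add_le_add hx (by rwa [abs_neg]))

private lemma mvt_abs' {f f' : ℝ → ℝ} {s : Set ℝ} (hconv : Convex ℝ s)
    (hf : ∀ x ∈ s, HasDerivWithinAt f (f' x) s x)
    {M : ℝ} (hM : ∀ x ∈ s, |f' x| ≤ M)
    {x y : ℝ} (hx : x ∈ s) (hy : y ∈ s) :
    |f y - f x| ≤ M * |y - x| := by
  have := Convex.norm_image_sub_le_of_norm_hasDerivWithin_le hf
    (fun z hz => by simpa [Real.norm_eq_abs] using hM z hz) hconv hx hy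
  simpa [Real.norm_eq_abs] using this

private lemma taylor_abs' {f f' f'' : ℝ → ℝ} {s : Set ℝ} (hconv : Convex ℝ s)
    (hf : ∀ x ∈ s, HasDerivWithinAt f (f' x) s x)
    (hf' : ∀ x ∈ s, HasDerivWithinAt f' (f'' x) s x)
    {M : ℝ} (hM : ∀ x ∈ s, |f'' x| ≤ M)
    {x y : ℝ} (hx : x ∈ s) (hy : y ∈ s) :
    |f y - f x - (y - x) * f' x| ≤ M * (y - x) ^ 2 := by
  have hM0 : 0 ≤ M := le_trans (abs_nonneg _) (hM x hx)
  have hts : segment ℝ x y ⊆ s := hconv.segment_subset hx hy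
  have hbound : ∀ z ∈ segment ℝ x y, ‖f' z - f' x‖ ≤ M * |y - x| := by
    intro z hz
    have h1 : |f' z - f' x| ≤ M * |z - x| := mvt_abs' hconv hf' hM hx (hts hz)
    have h2 : |z - x| ≤ |y - x| := by
      obtain ⟨a, b2, ha, hb2, hab, rfl⟩ := hz
      have e : a • x + b2 • y - x = b2 * (y - x) := by
        simp only [smul_eq_mul]; linear_combination x * hab
      rw [e, abs_mul, abs_of_nonneg hb2]
      nlinarith [abs_nonneg (y - x)]
    rw [Real.norm_eq_abs]
    exact le_trans h1 (by nlinarith [abs_nonneg (z - x)])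
  have hder : ∀ z ∈ segment ℝ x y,
      HasDerivWithinAt (fun w => f w - w * f' x) (f' z - f' x) (segment ℝ x y) z := by
    intro z hz
    have h1 : HasDerivWithinAt f (f' z) (segment ℝ x y) z := (hf z (hts hz)).mono hts
    have h2 : HasDerivWithinAt (fun w => w * f' x) (f' x) (segment ℝ x y) z := by
      simpa using (hasDerivWithinAt_id z (segment ℝ x y)).mul_const (f' x)
    exact h1.sub h2
  have hmain := Convex.norm_image_sub_le_of_norm_hasDerivWithin_le hder hbound
    (convex_segment x y) (left_mem_segment ℝ x y) (right_mem_segment ℝ x y)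
  rw [Real.norm_eq_abs, Real.norm_eq_abs] at hmain
  have e : f y - y * f' x - (f x - x * f' x) = f y - f x - (y - x) * f' x := by ring
  rw [e] at hmain
  refine le_trans hmain (le_of_eq ?_)
  rw [mul_assoc, abs_mul_abs_self]
  ring

private lemma tridiag_mulVec (u Pim Pip ρ : ℝ → ℝ) (N i : ℕ) (hi2 : 2 ≤ i) (hiN : i ≤ N) :
    (Pmat Pim Pip N - Kmat u N).mulVec (fun a : Fin (N + 1) => ρ (mpt N ((a : ℕ) + 1)))
      ⟨i - 1, Nat.lt_of_le_of_lt (Nat.sub_le i 1) (Nat.lt_succ_of_le hiN)⟩ =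
      (Pip (mpt N (i - 1)) - u (mpt N i)) * ρ (mpt N (i - 1))
      + ((1 - Pim (mpt N i) - Pip (mpt N i)) - (1 - u (mpt N i) - u (mpt N (i + 1)))) * ρ (mpt N i)
      + (Pim (mpt N (i + 1)) - u (mpt N (i + 1))) * ρ (mpt N (i + 1)) := by
  have hi1lt : i - 1 < N + 1 := by omega
  have hi2lt : i - 2 < N + 1 := by omega
  have hilt : i < N + 1 := by omega
  have hidx1 : i - 2 + 1 = i - 1 := by omega
  have hidx2 : i - 2 + 2 = i := by omega
  have hidx3 : i - 1 + 1 = i := by omega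
  have hidx4 : i - 1 + 2 = i + 1 := by omega
  set W := Pmat Pim Pip N - Kmat u N with hW
  set a0 : Fin (N + 1) := ⟨i - 1, hi1lt⟩ with ha0
  set pp : Fin (N + 1) := ⟨i - 2, hi2lt⟩ with hpp
  set rr : Fin (N + 1) := ⟨i, hilt⟩ with hrr
  have hva : (a0 : ℕ) = i - 1 := rfl
  have hvp : (pp : ℕ) = i - 2 := rfl
  have hvr : (rr : ℕ) = i := rfl
  have hW0 : ∀ bb : Fin (N + 1), bb ≠ pp → bb ≠ a0 → bb ≠ rr → W a0 bb = 0 := by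
    intro bb h1 h2 h3
    have hb1 : (bb : ℕ) ≠ i - 2 := fun hh => h1 (Fin.ext (by rw [hh, hvp]))
    have hb2 : (bb : ℕ) ≠ i - 1 := fun hh => h2 (Fin.ext (by rw [hh, hva]))
    have hb3 : (bb : ℕ) ≠ i := fun hh => h3 (Fin.ext (by rw [hh, hvr]))
    have hne : a0 ≠ bb := fun hh => h2 (hh.symm)
    simp only [hW, Matrix.sub_apply, Pmat, Kmat, hva]
    rw [if_neg (by omega), if_neg (by omega), if_neg hne,
        if_neg (by omega), if_neg (by omega), if_neg hne]
    norm_num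
  have hsum : W.mulVec (fun a : Fin (N + 1) => ρ (mpt N ((a : ℕ) + 1))) a0 =
      W a0 pp * ρ (mpt N ((pp : ℕ) + 1)) + W a0 a0 * ρ (mpt N ((a0 : ℕ) + 1))
      + W a0 rr * ρ (mpt N ((rr : ℕ) + 1)) := by
    have hdist : pp ∉ ({a0, rr} : Finset (Fin (N + 1))) := by
      simp only [Finset.mem_insert, Finset.mem_singleton, Fin.ext_iff, hva, hvp, hvr]
      omega
    have hdist2 : a0 ∉ ({rr} : Finset (Fin (N + 1))) := by
      simp only [Finset.mem_singleton, Fin.ext_iff, hva, hvr]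
      omega
    have hzero : ∀ x ∈ (Finset.univ : Finset (Fin (N + 1))),
        x ∉ ({pp, a0, rr} : Finset (Fin (N + 1))) →
        W a0 x * ρ (mpt N ((x : ℕ) + 1)) = 0 := by
      intro x _ hx
      simp only [Finset.mem_insert, Finset.mem_singleton, not_or] at hx
      rw [hW0 x hx.1 hx.2.1 hx.2.2, zero_mul]
    calc W.mulVec (fun a : Fin (N + 1) => ρ (mpt N ((a : ℕ) + 1))) a0
        = ∑ j : Fin (N + 1), W a0 j * ρ (mpt N ((j : ℕ) + 1)) := by
          simp [Matrix.mulVec, dotProduct]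
      _ = ∑ j ∈ ({pp, a0, rr} : Finset (Fin (N + 1))), W a0 j * ρ (mpt N ((j : ℕ) + 1)) :=
          (Finset.sum_subset (Finset.subset_univ _) hzero).symm
      _ = W a0 pp * ρ (mpt N ((pp : ℕ) + 1)) + (W a0 a0 * ρ (mpt N ((a0 : ℕ) + 1))
          + W a0 rr * ρ (mpt N ((rr : ℕ) + 1))) := by
          rw [Finset.sum_insert hdist, Finset.sum_insert hdist2, Finset.sum_singleton]
      _ = _ := by ring
  have hPp : Pmat Pim Pip N a0 pp = Pip (mpt N (i - 1)) := by
    simp only [Pmat, hva, hvp]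
    rw [if_pos (by omega : i - 1 = i - 2 + 1), hidx1]
  have hKp : Kmat u N a0 pp = u (mpt N i) := by
    simp only [Kmat, hva, hvp]
    rw [if_neg (by omega), if_pos (by omega : i - 1 = i - 2 + 1), hidx2]
  have hP0 : Pmat Pim Pip N a0 a0 = 1 - Pim (mpt N i) - Pip (mpt N i) := by
    simp only [Pmat, hva]
    rw [if_neg (by omega), if_neg (by omega), if_pos trivial, hidx3]
  have hK0 : Kmat u N a0 a0 = 1 - u (mpt N i) - u (mpt N (i + 1)) := by
    simp only [Kmat, hva]
    rw [if_neg (by omega), if_neg (by omega), if_pos trivial, if_neg (by omega),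
        if_neg (by omega), hidx3, hidx4]
  have hPr : Pmat Pim Pip N a0 rr = Pim (mpt N (i + 1)) := by
    simp only [Pmat, hva, hvr]
    rw [if_neg (by omega), if_pos (by omega : i = i - 1 + 1)]
  have hKr : Kmat u N a0 rr = u (mpt N (i + 1)) := by
    simp only [Kmat, hva, hvr]
    rw [if_pos (by omega : i = i - 1 + 1), hidx4]
  rw [hsum]
  simp only [hW, Matrix.sub_apply, hPp, hKp, hP0, hK0, hPr, hKr, hva, hvp, hvr, hidx1, hidx3]
  try ring

set_option maxHeartbeats 1000000 in
/-- The Glauber drift `N·(W_N ρ_N)_i`, where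
`W_N = P_N − K_N`, converges to `4c·((m − θ(m))·ρ(m))'` at `m = m_i` at rate
`O(1/N)`, uniformly over indices `i` with `m_i` in any compact interval
`[a₀, a₁] ⊂ (−1,1)`. -/
theorem glauber_drift_asymptotics
    (b β q c : ℝ) (hb : 0 < b) (hβ : 0 < β) (hc : 0 < c)
    (ρ : ℝ → ℝ) (hρ : ContDiffOn ℝ (⊤ : ℕ∞) ρ (Set.Icc (-1 : ℝ) 1))
    (θ u : ℝ → ℝ)
    (hθ : ∀ m, θ m = Real.tanh (β * (q + b * m)))
    (hu : ∀ m, u m = c * (1 - m * θ m))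
    (a₀ a₁ : ℝ) (ha₀ : -1 < a₀) (ha₁ : a₁ < 1) :
    ∃ C > 0, ∀ N : ℕ, 2 ≤ N → ∀ i : ℕ, ∀ _ : 2 ≤ i, ∀ hiN : i ≤ N,
      mpt N i ∈ Set.Icc a₀ a₁ →
      |(N : ℝ) * ((Pmat (fun m => c * (1 + m) * (1 - θ (m - 2 / N)))
              (fun m => c * (1 - m) * (1 + θ (m + 2 / N))) N
            - Kmat u N).mulVec (fun a : Fin (N + 1) => ρ (mpt N ((a : ℕ) + 1)))
            ⟨i - 1, by omega⟩)
        - 4 * c * deriv (fun m => (m - θ m) * ρ m) (mpt N i)| ≤ C / N := by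
  classical
  have hθfun : θ = fun x => Real.tanh (β * (q + b * x)) := funext hθ
  have htanh : ContDiff ℝ 2 Real.tanh := by
    have h1 : Real.tanh = fun x => Real.sinh x / Real.cosh x :=
      funext fun x => Real.tanh_eq_sinh_div_cosh x
    rw [h1]
    exact Real.contDiff_sinh.div Real.contDiff_cosh fun x => (Real.cosh_pos x).ne'
  have hθC : ContDiff ℝ 2 θ := by
    rw [hθfun]
    exact htanh.comp (contDiff_const.mul (contDiff_const.add (contDiff_const.mul contDiff_id)))
  have hθdiff : Differentiable ℝ θ := hθC.differentiable (by norm_num)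
  have hθ1C : ContDiff ℝ 1 (deriv θ) :=
    ((contDiff_succ_iff_deriv).mp (hθC.of_le (by norm_num))).2.2
  have hθ1diff : Differentiable ℝ (deriv θ) := hθ1C.differentiable (by norm_num)
  have hθ2cont : Continuous (deriv (deriv θ)) := (contDiff_one_iff_deriv.mp hθ1C).2
  set s : Set ℝ := Set.Icc (-1 : ℝ) 1 with hsdef
  have hconv : Convex ℝ s := convex_Icc _ _
  have hcomp : IsCompact s := isCompact_Icc
  have h0s : (0:ℝ) ∈ s := by rw [hsdef]; exact ⟨by norm_num, by norm_num⟩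
  have hud : UniqueDiffOn ℝ s := uniqueDiffOn_Icc (by norm_num)
  have hρ2 : ContDiffOn ℝ 2 ρ s := hρ.of_le (by exact WithTop.coe_le_coe.mpr (le_top : (2:ℕ∞) ≤ ⊤))
  have hρ1C : ContDiffOn ℝ 1 (derivWithin ρ s) s := hρ2.derivWithin hud (by norm_num)
  have hρ2C : ContDiffOn ℝ 0 (derivWithin (derivWithin ρ s) s) s :=
    hρ1C.derivWithin hud (by norm_num)
  have hρder : ∀ x ∈ s, HasDerivWithinAt ρ (derivWithin ρ s x) s x := fun x hx =>
    ((hρ2.differentiableOn (by norm_num)) x hx).hasDerivWithinAt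
  have hρ1der : ∀ x ∈ s,
      HasDerivWithinAt (derivWithin ρ s) (derivWithin (derivWithin ρ s) s x) s x :=
    fun x hx => ((hρ1C.differentiableOn (by norm_num)) x hx).hasDerivWithinAt
  have hθder : ∀ x ∈ s, HasDerivWithinAt θ (deriv θ x) s x := fun x _ =>
    (hθdiff x).hasDerivAt.hasDerivWithinAt
  have hθ1der : ∀ x ∈ s, HasDerivWithinAt (deriv θ) (deriv (deriv θ) x) s x := fun x _ =>
    (hθ1diff x).hasDerivAt.hasDerivWithinAt
  obtain ⟨M₀, hM₀⟩ := hcomp.exists_bound_of_continuousOn hρ2.continuousOn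
  obtain ⟨M₁, hM₁⟩ := hcomp.exists_bound_of_continuousOn hρ1C.continuousOn
  obtain ⟨M₂, hM₂⟩ := hcomp.exists_bound_of_continuousOn hρ2C.continuousOn
  obtain ⟨B, hB⟩ := hcomp.exists_bound_of_continuousOn hθC.continuous.continuousOn
  obtain ⟨L₁, hL₁⟩ := hcomp.exists_bound_of_continuousOn hθ1C.continuous.continuousOn
  obtain ⟨L₂, hL₂⟩ := hcomp.exists_bound_of_continuousOn hθ2cont.continuousOn
  simp only [Real.norm_eq_abs] at hM₀ hM₁ hM₂ hB hL₁ hL₂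
  have hM₀0 : 0 ≤ M₀ := le_trans (abs_nonneg _) (hM₀ 0 h0s)
  have hM₁0 : 0 ≤ M₁ := le_trans (abs_nonneg _) (hM₁ 0 h0s)
  have hM₂0 : 0 ≤ M₂ := le_trans (abs_nonneg _) (hM₂ 0 h0s)
  have hB0 : 0 ≤ B := le_trans (abs_nonneg _) (hB 0 h0s)
  have hL₁0 : 0 ≤ L₁ := le_trans (abs_nonneg _) (hL₁ 0 h0s)
  have hL₂0 : 0 ≤ L₂ := le_trans (abs_nonneg _) (hL₂ 0 h0s)
  set C₀ : ℝ := (B + 1) * (2 * M₂) + (1 + B) * M₁ + M₁ + 2 * (L₁ * M₁) + 4 * (L₂ * M₀)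
    with hC₀def
  have hC₀0 : 0 ≤ C₀ := by
    have t1 : 0 ≤ (B + 1) * (2 * M₂) := mul_nonneg (by linarith) (by linarith)
    have t2 : 0 ≤ (1 + B) * M₁ := mul_nonneg (by linarith) hM₁0
    have t3 : 0 ≤ 2 * (L₁ * M₁) := mul_nonneg (by norm_num) (mul_nonneg hL₁0 hM₁0)
    have t4 : 0 ≤ 4 * (L₂ * M₀) := mul_nonneg (by norm_num) (mul_nonneg hL₂0 hM₀0)
    rw [hC₀def]; linarith
  refine ⟨4 * c * (C₀ + 1), by nlinarith, ?_⟩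
  intro N hN i hi2 hiN hmem
  have hN0 : (0:ℝ) < N := by exact_mod_cast Nat.pos_of_ne_zero (by omega)
  have hNne : (N:ℝ) ≠ 0 := ne_of_gt hN0
  have hiR2 : (2:ℝ) ≤ (i:ℝ) := by exact_mod_cast hi2
  have hiRN : (i:ℝ) ≤ (N:ℝ) := by exact_mod_cast hiN
  have hNR : (2:ℝ) ≤ (N:ℝ) := by exact_mod_cast hN
  set d : ℝ := 2 / (N:ℝ) with hd
  have hd0 : 0 < d := by rw [hd]; positivity
  have hd1 : d ≤ 1 := by rw [hd, div_le_one hN0]; linarith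
  have hd1' : |d| ≤ 1 := by rw [abs_of_pos hd0]; exact hd1
  set m : ℝ := mpt N i with hm
  rw [Set.mem_Icc] at hmem
  obtain ⟨hma, hmb⟩ := hmem
  have hm1 : -1 < m := lt_of_lt_of_le ha₀ hma
  have hm2 : m < 1 := lt_of_le_of_lt hmb ha₁
  have hmabs : |m| ≤ 1 := abs_le.mpr ⟨by linarith, by linarith⟩
  have hms : m ∈ s := by rw [hsdef]; exact ⟨by linarith, by linarith⟩
  have hg1 : mpt N (i - 1) = m - d := by
    rw [hm, hd]; simp only [mpt]
    rw [Nat.cast_sub (by omega : 1 ≤ i)]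
    push_cast
    field_simp
    ring
  have hg2 : mpt N (i + 1) = m + d := by
    rw [hm, hd]; simp only [mpt]; push_cast; field_simp; ring
  have em1 : m - d = -1 + 2 * ((i:ℝ) - 2) / N := by
    rw [hm, hd]; simp only [mpt]; field_simp; ring
  have ep1 : m + d = -1 + 2 * (i:ℝ) / N := by
    rw [hm, hd]; simp only [mpt]; field_simp; ring
  have hmms : m - d ∈ s := by
    rw [hsdef]
    constructor
    · rw [em1]
      have : 0 ≤ 2 * ((i:ℝ) - 2) / N := div_nonneg (by linarith) hN0.le
      linarith
    · rw [em1]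
      have : 2 * ((i:ℝ) - 2) / N ≤ 2 := by rw [div_le_iff₀ hN0]; linarith
      linarith
  have hmps : m + d ∈ s := by
    rw [hsdef]
    constructor
    · rw [ep1]
      have : 0 ≤ 2 * (i:ℝ) / N := div_nonneg (by linarith) hN0.le
      linarith
    · rw [ep1]
      have : 2 * (i:ℝ) / N ≤ 2 := by rw [div_le_iff₀ hN0]; linarith
      linarith
  -- derivative of the target function at m
  have hnb : s ∈ nhds m := by rw [hsdef]; exact Icc_mem_nhds (by linarith) (by linarith)
  have hρat : HasDerivAt ρ (derivWithin ρ s m) m := by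
    rw [derivWithin_of_mem_nhds hnb]
    exact (((hρ2 m hms).contDiffAt hnb).differentiableAt (by norm_num)).hasDerivAt
  have hθat : HasDerivAt θ (deriv θ m) m := (hθdiff m).hasDerivAt
  have hg : HasDerivAt (fun x => (x - θ x) * ρ x)
      ((1 - deriv θ m) * ρ m + (m - θ m) * derivWithin ρ s m) m :=
    ((hasDerivAt_id' m).sub hθat).mul hρat
  have hderiv : deriv (fun x => (x - θ x) * ρ x) m
      = (1 - deriv θ m) * ρ m + (m - θ m) * derivWithin ρ s m := hg.deriv
  -- Taylor bounds
  have hδm : |ρ (m - d) - ρ m + d * derivWithin ρ s m| ≤ M₂ * d ^ 2 := by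
    have h0 := taylor_abs' hconv hρder hρ1der hM₂ hms hmms
    have e1 : ρ (m - d) - ρ m - (m - d - m) * derivWithin ρ s m
        = ρ (m - d) - ρ m + d * derivWithin ρ s m := by ring
    have e2 : M₂ * (m - d - m) ^ 2 = M₂ * d ^ 2 := by ring
    rw [e1, e2] at h0
    exact h0
  have hδp : |ρ (m + d) - ρ m - d * derivWithin ρ s m| ≤ M₂ * d ^ 2 := by
    have h0 := taylor_abs' hconv hρder hρ1der hM₂ hms hmps
    have e1 : ρ (m + d) - ρ m - (m + d - m) * derivWithin ρ s m
        = ρ (m + d) - ρ m - d * derivWithin ρ s m := by ring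
    have e2 : M₂ * (m + d - m) ^ 2 = M₂ * d ^ 2 := by ring
    rw [e1, e2] at h0
    exact h0
  have hηp : |θ (m + d) - θ m - d * deriv θ m| ≤ L₂ * d ^ 2 := by
    have h0 := taylor_abs' hconv hθder hθ1der hL₂ hms hmps
    have e1 : θ (m + d) - θ m - (m + d - m) * deriv θ m
        = θ (m + d) - θ m - d * deriv θ m := by ring
    have e2 : L₂ * (m + d - m) ^ 2 = L₂ * d ^ 2 := by ring
    rw [e1, e2] at h0
    exact h0
  have hηm : |θ (m - d) - θ m + d * deriv θ m| ≤ L₂ * d ^ 2 := by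
    have h0 := taylor_abs' hconv hθder hθ1der hL₂ hms hmms
    have e1 : θ (m - d) - θ m - (m - d - m) * deriv θ m
        = θ (m - d) - θ m + d * deriv θ m := by ring
    have e2 : L₂ * (m - d - m) ^ 2 = L₂ * d ^ 2 := by ring
    rw [e1, e2] at h0
    exact h0
  have hrm : |ρ (m - d) - ρ m| ≤ M₁ * d := by
    have h0 := mvt_abs' hconv hρder hM₁ hms hmms
    rwa [show m - d - m = -d by ring, abs_neg, abs_of_pos hd0] at h0
  have hrp : |ρ (m + d) - ρ m| ≤ M₁ * d := by
    have h0 := mvt_abs' hconv hρder hM₁ hms hmps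
    rwa [show m + d - m = d by ring, abs_of_pos hd0] at h0
  have htp : |θ (m + d) - θ m| ≤ L₁ * d := by
    have h0 := mvt_abs' hconv hθder hL₁ hms hmps
    rwa [show m + d - m = d by ring, abs_of_pos hd0] at h0
  have ht0 : |θ m| ≤ B := hB m hms
  have hr0 : |ρ m| ≤ M₀ := hM₀ m hms
  -- the main remainder
  set R : ℝ := (θ m - m) * ((ρ (m - d) - ρ m + d * derivWithin ρ s m)
        - (ρ (m + d) - ρ m - d * derivWithin ρ s m))
      + d * (1 + θ m) * (ρ (m - d) - ρ m)
      + d * (ρ (m + d) - ρ m)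
      + (m + d) * (θ (m + d) - θ m) * (ρ (m + d) - ρ m)
      + (m * ((θ (m + d) - θ m - d * deriv θ m) + (θ (m - d) - θ m + d * deriv θ m))
         + ((θ (m - d) - θ m + d * deriv θ m) - (θ (m + d) - θ m - d * deriv θ m))) * ρ m
    with hRdef
  have hT1 : |(θ m - m) * ((ρ (m - d) - ρ m + d * derivWithin ρ s m)
      - (ρ (m + d) - ρ m - d * derivWithin ρ s m))|
      ≤ (B + 1) * (M₂ * d ^ 2 + M₂ * d ^ 2) :=
    abs_mul_bound' (abs_sub_bound' ht0 hmabs) (abs_sub_bound' hδm hδp)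
  have hT2 : |d * (1 + θ m) * (ρ (m - d) - ρ m)| ≤ d * (1 + B) * (M₁ * d) :=
    abs_mul_bound' (abs_mul_bound' (le_of_eq (abs_of_pos hd0))
      (abs_add_bound' (le_of_eq abs_one) ht0)) hrm
  have hT3 : |d * (ρ (m + d) - ρ m)| ≤ d * (M₁ * d) :=
    abs_mul_bound' (le_of_eq (abs_of_pos hd0)) hrp
  have hT4 : |(m + d) * (θ (m + d) - θ m) * (ρ (m + d) - ρ m)|
      ≤ (1 + 1) * (L₁ * d) * (M₁ * d) :=
    abs_mul_bound' (abs_mul_bound' (abs_add_bound' hmabs hd1') htp) hrp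
  have hT5 : |(m * ((θ (m + d) - θ m - d * deriv θ m) + (θ (m - d) - θ m + d * deriv θ m))
      + ((θ (m - d) - θ m + d * deriv θ m) - (θ (m + d) - θ m - d * deriv θ m))) * ρ m|
      ≤ (1 * (L₂ * d ^ 2 + L₂ * d ^ 2) + (L₂ * d ^ 2 + L₂ * d ^ 2)) * M₀ :=
    abs_mul_bound' (abs_add_bound' (abs_mul_bound' hmabs (abs_add_bound' hηp hηm))
      (abs_sub_bound' hηm hηp)) hr0
  have hRb : |R| ≤ C₀ * d ^ 2 := by
    have hsum5 := abs_add_bound' (abs_add_bound' (abs_add_bound'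
      (abs_add_bound' hT1 hT2) hT3) hT4) hT5
    rw [hRdef]
    refine le_trans hsum5 (le_of_eq ?_)
    rw [hC₀def]; ring
  have hfin : |(N:ℝ) * c * R| ≤ 4 * c * (C₀ + 1) / N := by
    calc |(N:ℝ) * c * R| = (N:ℝ) * c * |R| := by
          rw [abs_mul, abs_mul, abs_of_pos hN0, abs_of_pos hc]
      _ ≤ (N:ℝ) * c * (C₀ * d ^ 2) := by
          apply mul_le_mul_of_nonneg_left hRb (by positivity)
      _ = 4 * c * C₀ / N := by rw [hd]; field_simp; ring
      _ ≤ 4 * c * (C₀ + 1) / N := by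
          gcongr
          nlinarith
  -- rewrite the goal
  rw [tridiag_mulVec u (fun x => c * (1 + x) * (1 - θ (x - d)))
      (fun x => c * (1 - x) * (1 + θ (x + d))) ρ N i hi2 hiN]
  simp only [hg1, hg2, ← hm]
  rw [show m - d + d = m by ring, show m + d - d = m by ring]
  simp only [hu]
  rw [hderiv]
  convert hfin using 2
  rw [hRdef]
  have hNd : (N:ℝ) * d = 2 := by rw [hd]; field_simp
  linear_combination (4 * c * ((1 - deriv θ m) * ρ m + (m - θ m) * derivWithin ρ s m) / 2) * hNd
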